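/- Let (W_k)_{k∈ℤ} be a strictly stationary sequence and (V_k)_{k∈ℤ} i.i.d. Bernoulli(p) independent of W, 0 < p < 1. Define the spaced sequence W̃ by placing W_j at the j-th position k where V_k = 1 (in increasing order, indexed so that κ_0 ≤ 0 < κ_1) and 0 where V_k = 0. Then W̃ is strictly stationary. -/

import Mathlib

/-!
Move the origin of `ℤ` to site `1`. The spaced sequence built from `(W, V)` then becomes the
spaced sequence built from `(W', V')`, where `V'` is `V` shifted by one and `W'` is `W` shifted by
`V₁`: every occupied site to the right of `1` loses one from its label exactly when site `1` is
occupied. On the product law of `(V, W)` this change of origin is a skew product over the shift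
of `V` whose fibre maps are shifts of `W`, so it preserves the law because the laws of `V` and of
`W` are both shift invariant. Hence the law of the whole spaced sequence is shift invariant, which
is the same as strict stationarity of its finite windows.
-/

open MeasureTheory ProbabilityTheory

/-- The "spaced" sequence `S(W,V)` of Construction 2.2: the terms of `W` are
placed, in order, at the (random) positions `… < κ₋₁ < κ₀ ≤ 0 < κ₁ < κ₂ < …`
where `V = 1` (indexed so that `κ₀ ≤ 0 < κ₁`), and `0` is placed where `V = 0`.
Concretely, if `V_k = 1` then the index `j` with `κ_j = k` is the number of
ones of `V` in `[1,k]` when `k ≥ 1`, and minus the number of ones in `[k+1,0]`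
when `k ≤ 0`. -/
noncomputable def spacedSeq {Ω : Type*} (W : ℤ → Ω → ℝ) (V : ℤ → Ω → ℕ)
    (k : ℤ) (ω : Ω) : ℝ :=
  if V k ω = 1 then
    (if 1 ≤ k then
      W ((((Finset.Icc 1 k).filter (fun i => V i ω = 1)).card : ℤ)) ω
    else
      W (-((((Finset.Icc (k + 1) 0).filter (fun i => V i ω = 1)).card : ℤ))) ω)
  else 0

section Stationarity

variable {Ω β : Type*} [MeasurableSpace Ω] [MeasurableSpace β]

def IsStrictlyStationary (μ : Measure Ω) (X : ℤ → Ω → β) : Prop :=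
  ∀ (i j : ℤ) (n : ℕ),
    μ.map (fun ω (m : Fin n) => X (i + m) ω) = μ.map (fun ω (m : Fin n) => X (j + m) ω)

lemma Finset.exists_restrict_eq_comp_window (I : Finset ℤ) :
    ∃ (a : ℤ) (n : ℕ) (g : (Fin n → β) → (I → β)), Measurable g ∧
      ∀ (x : ℤ → β) (c : ℤ),
        I.restrict (fun k => x (k + c)) = g fun m => x (a + c + m) := by
  obtain ⟨a, ha⟩ := I.bddBelow
  obtain ⟨b, hb⟩ := I.bddAbove
  have hab : ∀ i ∈ I, a ≤ i ∧ i ≤ b := fun i hi => ⟨ha hi, hb hi⟩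
  refine ⟨a, (b - a + 1).toNat,
    fun y i => y ⟨(i - a).toNat, by have := hab i i.2; omega⟩,
    measurable_pi_lambda _ fun _ => measurable_pi_apply _, fun x c => ?_⟩
  funext i
  have := hab i i.2
  simp only [Finset.restrict]
  congr 1
  omega

variable {μ : Measure Ω} {X : ℤ → Ω → β}

lemma map_window_eq_map_map (hX : ∀ k, Measurable (X k)) (i : ℤ) (n : ℕ) :
    μ.map (fun ω (m : Fin n) => X (i + m) ω) =
      (μ.map fun ω k => X k ω).map (fun x (m : Fin n) => x (i + m)) :=
  (Measure.map_map (measurable_pi_lambda _ fun _ => measurable_pi_apply _)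
    (measurable_pi_lambda _ hX)).symm

lemma map_shift_eq_map_map (hX : ∀ k, Measurable (X k)) :
    μ.map (fun ω k => X (k + 1) ω) = (μ.map fun ω k => X k ω).map (fun x k => x (k + 1)) :=
  (Measure.map_map (measurable_pi_lambda _ fun _ => measurable_pi_apply _)
    (measurable_pi_lambda _ hX)).symm

theorem IsStrictlyStationary.measurePreserving_shift [IsFiniteMeasure μ]
    (hs : IsStrictlyStationary μ X) (hX : ∀ k, Measurable (X k)) :
    MeasurePreserving (fun x k => x (k + 1)) (μ.map fun ω k => X k ω)
      (μ.map fun ω k => X k ω) := by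
  refine ⟨by fun_prop, ?_⟩
  rw [← map_shift_eq_map_map hX, map_eq_iff_forall_finset_map_restrict_eq
    (measurable_pi_lambda _ fun _ => hX _).aemeasurable (measurable_pi_lambda _ hX).aemeasurable]
  intro I
  obtain ⟨a, n, g, hg, hI⟩ := I.exists_restrict_eq_comp_window (β := β)
  have hI' (c : ℤ) : μ.map (fun ω => I.restrict (fun k => X (k + c) ω)) =
      (μ.map (fun ω (m : Fin n) => X (a + c + m) ω)).map g := by
    rw [Measure.map_map hg (measurable_pi_lambda _ fun _ => hX _)]
    exact congrArg (μ.map ·) (funext fun ω => hI (fun k => X k ω) c)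
  have h0 := hI' 0
  simp only [add_zero] at h0
  rw [hI' 1, h0, hs (a + 1) a n]

theorem IsStrictlyStationary.of_measurePreserving_shift (hX : ∀ k, Measurable (X k))
    (h : MeasurePreserving (fun x k => x (k + 1)) (μ.map fun ω k => X k ω)
      (μ.map fun ω k => X k ω)) :
    IsStrictlyStationary μ X := by
  have step (i : ℤ) (n : ℕ) : μ.map (fun ω (m : Fin n) => X (i + 1 + m) ω) =
      μ.map (fun ω (m : Fin n) => X (i + m) ω) := by
    simp_rw [add_right_comm i 1]
    rw [map_window_eq_map_map (X := fun k => X (k + 1)) (fun k => hX _),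
      map_shift_eq_map_map hX, h.map_eq, ← map_window_eq_map_map hX]
  have to_zero (n : ℕ) (i : ℤ) : μ.map (fun ω (m : Fin n) => X (i + m) ω) =
      μ.map (fun ω (m : Fin n) => X (0 + m) ω) := by
    induction i using Int.induction_on with
    | zero => rfl
    | succ i ih => rw [step, ih]
    | pred i ih => rw [← ih, ← step, sub_add_cancel]
  intro i j n
  rw [to_zero n i, to_zero n j]

end Stationarity

section IID

variable {Ω β : Type*} [MeasurableSpace Ω] [MeasurableSpace β] {μ : Measure Ω}

lemma identDistrib_of_eq_zero_or_eq_one [IsProbabilityMeasure μ] {X Y : Ω → ℕ}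
    (hX : Measurable X) (hY : Measurable Y) (hX01 : ∀ ω, X ω = 0 ∨ X ω = 1)
    (hY01 : ∀ ω, Y ω = 0 ∨ Y ω = 1)
    (h : μ {ω | X ω = 1} = μ {ω | Y ω = 1}) :
    IdentDistrib X Y μ μ := by
  have preimage (Z : Ω → ℕ) (hZ01 : ∀ ω, Z ω = 0 ∨ Z ω = 1) (c : ℕ) (hc : c ≠ 1) :
      Z ⁻¹' {c} = if c = 0 then {ω | Z ω = 1}ᶜ else ∅ := by
    ext ω
    rcases hZ01 ω with h | h <;> split_ifs <;> simp_all [eq_comm]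
  refine ⟨hX.aemeasurable, hY.aemeasurable, Measure.ext_iff_singleton.mpr fun c => ?_⟩
  rw [Measure.map_apply hX (measurableSet_singleton c),
    Measure.map_apply hY (measurableSet_singleton c)]
  by_cases hc : c = 1
  · exact hc ▸ h
  rw [preimage X hX01 c hc, preimage Y hY01 c hc]
  split_ifs
  · rw [prob_compl_eq_one_sub (s := {ω | X ω = 1}) (hX (measurableSet_singleton 1)),
      prob_compl_eq_one_sub (s := {ω | Y ω = 1}) (hY (measurableSet_singleton 1)), h]
  · rfl

theorem ProbabilityTheory.iIndepFun.isStrictlyStationary {X : ℤ → Ω → β}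
    (hX : ∀ k, Measurable (X k)) (hind : iIndepFun X μ)
    (hident : ∀ k, IdentDistrib (X k) (X 0) μ μ) :
    IsStrictlyStationary μ X := by
  have window_eq_pi (i : ℤ) (n : ℕ) : μ.map (fun ω (m : Fin n) => X (i + m) ω) =
      Measure.pi fun _ => μ.map (X 0) := by
    rw [(hind.precomp (g := fun m : Fin n => i + m) fun a b h => Fin.ext (by simpa using h)
      ).map_fun_eq_pi_map fun _ => (hX _).aemeasurable]
    simp_rw [(hident _).map_eq]
  intro i j n
  rw [window_eq_pi, window_eq_pi]

end IID

section Measurability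

variable {Ω β : Type*} [MeasurableSpace Ω] [MeasurableSpace β]

lemma measurable_apply_of_measurable_index {ι : Type*} [Countable ι] [MeasurableSpace ι]
    [MeasurableSingletonClass ι] {X : ι → Ω → β} (hX : ∀ i, Measurable (X i)) {N : Ω → ι}
    (hN : Measurable N) : Measurable fun ω => X (N ω) ω :=
  (measurable_from_prod_countable_left (f := fun p : Ω × ι => X p.2 p.1) hX).comp
    (measurable_id.prodMk hN)

lemma measurable_card_filter {ι : Type*} (s : Finset ι) {V : ι → Ω → ℕ}
    (hV : ∀ i, Measurable (V i)) (c : ℕ) :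
    Measurable fun ω => ((s.filter fun i => V i ω = c).card : ℤ) := by
  simp_rw [Finset.card_filter]
  push_cast
  exact Finset.measurable_sum _ fun i _ =>
    Measurable.ite (hV i (measurableSet_singleton c)) measurable_const measurable_const

lemma measurable_spacedSeq {W : ℤ → Ω → ℝ} {V : ℤ → Ω → ℕ} (hW : ∀ k, Measurable (W k))
    (hV : ∀ k, Measurable (V k)) (k : ℤ) : Measurable (spacedSeq W V k) := by
  refine Measurable.ite (hV k (measurableSet_singleton 1)) ?_ measurable_const
  split_ifs
  · exact measurable_apply_of_measurable_index hW (measurable_card_filter _ hV 1)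
  · exact measurable_apply_of_measurable_index hW (measurable_card_filter _ hV 1).neg

end Measurability

namespace Finset

lemma card_filter_Icc_comp_add_one (p : ℤ → Prop) [DecidablePred p] (a b : ℤ) :
    #{i ∈ Icc a b | p (i + 1)} = #{i ∈ Icc (a + 1) (b + 1) | p i} := by
  rw [← map_add_right_Icc, filter_map, card_map]
  rfl

lemma card_filter_Icc_add_one_right (p : ℤ → Prop) [DecidablePred p] {a b : ℤ}
    (h : a ≤ b + 1) :
    #{i ∈ Icc a (b + 1) | p i} = #{i ∈ Icc a b | p i} + if p (b + 1) then 1 else 0 := by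
  rw [card_filter, card_filter, ← insert_Icc_right_eq_Icc_add_one h, sum_insert (by simp),
    add_comm]

lemma card_filter_Icc_eq_add_one_left (p : ℤ → Prop) [DecidablePred p] {a b : ℤ}
    (h : a ≤ b) :
    #{i ∈ Icc a b | p i} = (if p a then 1 else 0) + #{i ∈ Icc (a + 1) b | p i} := by
  rw [card_filter, card_filter, ← insert_Icc_add_one_left_eq_Icc h, sum_insert (by simp)]

end Finset

noncomputable def spacedPath (q : (ℤ → ℕ) × (ℤ → ℝ)) (k : ℤ) : ℝ :=
  spacedSeq (fun j q => q.2 j) (fun i q => q.1 i) k q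

def spacingShift (q : (ℤ → ℕ) × (ℤ → ℝ)) : (ℤ → ℕ) × (ℤ → ℝ) :=
  (fun k => q.1 (k + 1), fun k => q.2 (k + if q.1 1 = 1 then 1 else 0))

lemma measurable_spacedPath : Measurable spacedPath :=
  measurable_pi_lambda _ <| measurable_spacedSeq
    (fun _ => (measurable_pi_apply _).comp measurable_snd)
    (fun _ => (measurable_pi_apply _).comp measurable_fst)

lemma spacedPath_spacingShift (q : (ℤ → ℕ) × (ℤ → ℝ)) (k : ℤ) :
    spacedPath (spacingShift q) k = spacedPath q (k + 1) := by
  obtain ⟨v, w⟩ := q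
  dsimp only [spacedPath, spacedSeq, spacingShift]
  rw [Finset.card_filter_Icc_comp_add_one (fun i => v i = 1),
    Finset.card_filter_Icc_comp_add_one (fun i => v i = 1)]
  by_cases hk : v (k + 1) = 1
  swap
  · simp [hk]
  rcases lt_trichotomy k 0 with hneg | rfl | hpos
  · rw [Finset.card_filter_Icc_add_one_right _ (a := k + 1 + 1) (b := 0) (by omega)]
    simp only [hk, if_true, show ¬ 1 ≤ k by omega, show ¬ 1 ≤ k + 1 by omega, if_false,
      zero_add]
    split_ifs <;> push_cast <;> ring_nf
  · simp_all [Finset.filter_singleton]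
  · rw [Finset.card_filter_Icc_eq_add_one_left _ (show 1 ≤ k + 1 by omega)]
    simp only [hk, if_true, show 1 ≤ k by omega, show 1 ≤ k + 1 by omega]
    split_ifs <;> push_cast <;> ring_nf

theorem measurePreserving_spacingShift {P : Measure (ℤ → ℕ)} {Q : Measure (ℤ → ℝ)}
    [SFinite P] [SFinite Q] (hP : MeasurePreserving (fun v k => v (k + 1)) P P)
    (hQ : MeasurePreserving (fun w k => w (k + 1)) Q Q) :
    MeasurePreserving spacingShift (P.prod Q) (P.prod Q) := by
  refine hP.skew_product
    (g := fun v (w : ℤ → ℝ) k => w (k + if v 1 = 1 then 1 else 0)) ?_ (ae_of_all _ fun v => ?_)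
  · refine measurable_pi_lambda _ fun k =>
      measurable_apply_of_measurable_index (X := fun j (q : (ℤ → ℕ) × (ℤ → ℝ)) => q.2 j)
        (fun j => (measurable_pi_apply j).comp measurable_snd) ?_
    exact measurable_const.add (Measurable.ite
      (measurableSet_eq_fun ((measurable_pi_apply 1).comp measurable_fst) measurable_const)
      measurable_const measurable_const)
  · by_cases h : v 1 = 1
    · simpa [h] using hQ.map_eq
    · simp [h, Measure.map_id']

lemma MeasureTheory.MeasurePreserving.map_of_semiconj {α γ : Type*} [MeasurableSpace α]
    [MeasurableSpace γ] {μ : Measure α} {T : α → α} {f : α → γ} {S : γ → γ}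
    (hT : MeasurePreserving T μ μ) (hf : Measurable f) (hS : Measurable S)
    (h : Function.Semiconj f T S) : MeasurePreserving S (μ.map f) (μ.map f) :=
  ⟨hS, by
    rw [Measure.map_map hS hf, ← h.comp_eq, ← Measure.map_map hf hT.measurable, hT.map_eq]⟩

theorem spaced_sequence_strictly_stationary_general
    {Ω : Type*} [MeasurableSpace Ω] (μ : Measure Ω) [IsProbabilityMeasure μ]
    (W : ℤ → Ω → ℝ) (V : ℤ → Ω → ℕ)
    (hWmeas : ∀ k, Measurable (W k)) (hVmeas : ∀ k, Measurable (V k))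
    (hWstat : ∀ (i j : ℤ) (n : ℕ),
      Measure.map (fun ω => fun m : Fin n => W (i + m) ω) μ =
        Measure.map (fun ω => fun m : Fin n => W (j + m) ω) μ)
    (p : ℝ)
    (hV01 : ∀ k ω, V k ω = 0 ∨ V k ω = 1)
    (hViid : iIndepFun V μ)
    (hVp : ∀ k, μ {ω | V k ω = 1} = ENNReal.ofReal p)
    (hindep : IndepFun (fun ω => fun k : ℤ => V k ω)
      (fun ω => fun k : ℤ => W k ω) μ) :
    ∀ (i j : ℤ) (n : ℕ),
      Measure.map (fun ω => fun m : Fin n => spacedSeq W V (i + m) ω) μ =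
        Measure.map (fun ω => fun m : Fin n => spacedSeq W V (j + m) ω) μ := by
  have hVstat : IsStrictlyStationary μ V := hViid.isStrictlyStationary hVmeas fun k =>
    identDistrib_of_eq_zero_or_eq_one (hVmeas k) (hVmeas 0) (hV01 k) (hV01 0)
      ((hVp k).trans (hVp 0).symm)
  have hpaths : Measurable fun ω => ((V · ω), (W · ω)) :=
    (measurable_pi_lambda _ hVmeas).prodMk (measurable_pi_lambda _ hWmeas)
  have hspacing : MeasurePreserving spacingShift (μ.map fun ω => ((V · ω), (W · ω)))
      (μ.map fun ω => ((V · ω), (W · ω))) := by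
    rw [hindep.map_prod_eq_prod_map_map (measurable_pi_lambda _ hVmeas).aemeasurable
      (measurable_pi_lambda _ hWmeas).aemeasurable]
    exact measurePreserving_spacingShift (hVstat.measurePreserving_shift hVmeas)
      (IsStrictlyStationary.measurePreserving_shift hWstat hWmeas)
  have hlaw : (μ.map fun ω k => spacedSeq W V k ω) =
      (μ.map fun ω => ((V · ω), (W · ω))).map spacedPath :=
    (Measure.map_map measurable_spacedPath hpaths).symm
  refine IsStrictlyStationary.of_measurePreserving_shift (measurable_spacedSeq hWmeas hVmeas) ?_
  rw [hlaw]
  exact hspacing.map_of_semiconj measurable_spacedPath (by fun_prop)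
    fun q => funext (spacedPath_spacingShift q)

/-- Let `(W_k)_{k∈ℤ}` be a strictly stationary sequence and `(V_k)_{k∈ℤ}`
i.i.d. Bernoulli(`p`), `0 < p < 1`, independent of `W`.  Then the spaced
sequence `W̃ = S(W,V)` is strictly stationary. -/
theorem spaced_sequence_strictly_stationary
    {Ω : Type*} [MeasurableSpace Ω] (μ : Measure Ω) [IsProbabilityMeasure μ]
    (W : ℤ → Ω → ℝ) (V : ℤ → Ω → ℕ)
    (hWmeas : ∀ k, Measurable (W k)) (hVmeas : ∀ k, Measurable (V k))
    (hWstat : ∀ (i j : ℤ) (n : ℕ),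
      Measure.map (fun ω => fun m : Fin n => W (i + m) ω) μ =
        Measure.map (fun ω => fun m : Fin n => W (j + m) ω) μ)
    (p : ℝ) (hp0 : 0 < p) (hp1 : p < 1)
    (hV01 : ∀ k ω, V k ω = 0 ∨ V k ω = 1)
    (hViid : iIndepFun V μ)
    (hVp : ∀ k, μ {ω | V k ω = 1} = ENNReal.ofReal p)
    (hindep : IndepFun (fun ω => fun k : ℤ => V k ω)
      (fun ω => fun k : ℤ => W k ω) μ) :
    ∀ (i j : ℤ) (n : ℕ),
      Measure.map (fun ω => fun m : Fin n => spacedSeq W V (i + m) ω) μ =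
        Measure.map (fun ω => fun m : Fin n => spacedSeq W V (j + m) ω) μ :=
  spaced_sequence_strictly_stationary_general μ W V hWmeas hVmeas hWstat p hV01 hViid hVp hindep
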